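/- arXiv:1707.01403 — 2 statements merged into one kernel-verified Lean document; each statement's English description precedes it below -/
import Mathlib

section
/- For n ≥ 1 and nonnegative integers p, q, p', q', the system (q - p)² = (q' - p')² and n(p² + q²) + 2pq + n(p + q) = n(p'² + q'²) + 2p'q' + n(p' + q') holds if and only if (p, q) = (p', q') or (p, q) = (q', p'). -/
section OrderedRing

variable {R : Type*} [CommRing R] [LinearOrder R] [IsStrictOrderedRing R]

theorem eq_or_swap_of_add_eq_of_sq_sub_eq {p q p' q' : R}
    (hsum : p + q = p' + q') (hdiff : (q - p) ^ 2 = (q' - p') ^ 2) :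
    (p = p' ∧ q = q') ∨ (p = q' ∧ q = p') := by
  rcases sq_eq_sq_iff_eq_or_eq_neg.mp hdiff with h | h
  · exact .inl ⟨by linarith, by linarith⟩
  · exact .inr ⟨by linarith, by linarith⟩

/-- Once the `(q - p)²` terms cancel, the Casimir equation reads
`(n + 1) s² + 2 n s = (n + 1) s'² + 2 n s'` in the sums `s = p + q`, `s' = p' + q'`,
and the left side is strictly increasing for `s ≥ 0`. -/
theorem add_eq_add_of_sq_sub_eq_of_casimir_eq {n p q p' q' : R} (hn : 0 ≤ n)
    (hp : 0 ≤ p) (hq : 0 ≤ q) (hp' : 0 ≤ p') (hq' : 0 ≤ q')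
    (hdiff : (q - p) ^ 2 = (q' - p') ^ 2)
    (hcas : n * (p ^ 2 + q ^ 2) + 2 * p * q + n * (p + q)
        = n * (p' ^ 2 + q' ^ 2) + 2 * p' * q' + n * (p' + q')) :
    p + q = p' + q' := by
  have hfac : (p + q - (p' + q')) * ((n + 1) * (p + q + (p' + q')) + 2 * n) = 0 := by
    linear_combination 2 * hcas - (n - 1) * hdiff
  rcases mul_eq_zero.mp hfac with h | h
  · linarith
  · nlinarith

end OrderedRing

theorem stmt_1_general (n : ℕ) (p q p' q' : ℕ) :
    (((q : ℤ) - p) ^ 2 = ((q' : ℤ) - p') ^ 2 ∧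
      n * (p ^ 2 + q ^ 2) + 2 * p * q + n * (p + q)
        = n * (p' ^ 2 + q' ^ 2) + 2 * p' * q' + n * (p' + q'))
    ↔ ((p, q) = (p', q') ∨ (p, q) = (q', p')) := by
  simp only [Prod.mk.injEq]
  constructor
  · rintro ⟨hdiff, hcas⟩
    have hsum : (p : ℤ) + q = p' + q' :=
      add_eq_add_of_sq_sub_eq_of_casimir_eq (Int.natCast_nonneg n) (Int.natCast_nonneg p)
        (Int.natCast_nonneg q) (Int.natCast_nonneg p') (Int.natCast_nonneg q') hdiff
        (by exact_mod_cast hcas)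
    exact_mod_cast eq_or_swap_of_add_eq_of_sq_sub_eq hsum hdiff
  · rintro (⟨rfl, rfl⟩ | ⟨rfl, rfl⟩) <;> constructor <;> ring

theorem stmt_1 (n : ℕ) (hn : 1 ≤ n) (p q p' q' : ℕ) :
    (((q : ℤ) - p) ^ 2 = ((q' : ℤ) - p') ^ 2 ∧
      n * (p ^ 2 + q ^ 2) + 2 * p * q + n * (p + q)
        = n * (p' ^ 2 + q' ^ 2) + 2 * p' * q' + n * (p' + q'))
    ↔ ((p, q) = (p', q') ∨ (p, q) = (q', p')) :=
  stmt_1_general n p q p' q'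
end

section
/- For every integer n ≥ 2 there exist distinct pairs of nonnegative integers (x, y) ≠ (x', y') with q(x, y) = q(x', y'), where q(x, y) = 4nx + 2x² + 8ny + 4xy + 4y² − 4x − 10y; explicitly, for n ≥ 3 one may take (x, y) = (n + 3, 0) and (x', y') = (n − 3, 4). -/
/-- Freudenthal eigenvalue for Cartan type B I. -/
def qBI (n x y : ℤ) : ℤ := 4 * n * x + 2 * x ^ 2 + 8 * n * y + 4 * x * y + 4 * y ^ 2 - 4 * x - 10 * y

theorem qBI_add_three_zero_eq_sub_three_four (n : ℤ) : qBI n (n + 3) 0 = qBI n (n - 3) 4 := by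
  unfold qBI; ring

/- The paper's pair `(n + 3, 0)`, `(n - 3, 4)` leaves the nonnegative quadrant at `n = 2`;
this shifted pair is nonnegative for all `n ≥ 2`. -/
theorem qBI_sub_two_five_eq_add_four_one (n : ℤ) : qBI n (n - 2) 5 = qBI n (n + 4) 1 := by
  unfold qBI; ring

theorem stmt_8 :
    (∀ n : ℤ, 2 ≤ n → ∃ x y x' y' : ℤ, 0 ≤ x ∧ 0 ≤ y ∧ 0 ≤ x' ∧ 0 ≤ y' ∧
      (x, y) ≠ (x', y') ∧ qBI n x y = qBI n x' y') ∧
    (∀ n : ℤ, 3 ≤ n → qBI n (n + 3) 0 = qBI n (n - 3) 4) := by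
  refine ⟨fun n hn => ?_, fun n _ => qBI_add_three_zero_eq_sub_three_four n⟩
  refine ⟨n - 2, 5, n + 4, 1, by omega, by norm_num, by omega, by norm_num, ?_,
    qBI_sub_two_five_eq_add_four_one n⟩
  simp only [ne_eq, Prod.mk.injEq]
  omega
end
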